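/- There exist universal constants c > 0 and δ₀ > 0 such that for all integers m, M with m < M, every subset S ⊆ {1,...,M} with |S| = m, and every δ ∈ (0, δ₀), it holds that d_TV(U_M, U_M^{S, δ/√m}) ≥ c·δ. -/

import Mathlib

/-! Under `U_M^{S,η}` the number of `true` coordinates in `S` is binomial `Bin(m, 1/2 + η)`,
so the event "more than `m/2` of them are true" shows
`d_TV ≥ P(Bin(m, 1/2 + η) > m/2) - P(Bin(m, 1/2) > m/2)`. Differentiating in `p`, the Bernstein
polynomials telescope and the derivative of this tail is `m · b_{m-1,⌊m/2⌋}(p)`; the central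
binomial estimate `16^r ≤ (4r+1) · C(2r,r)²` makes it at least `√m/8` on
`[1/2, 1/2 + δ/√m]`, and the mean value theorem gives `d_TV ≥ δ/8`. -/

open Finset

/-- The uniform distribution `U_M` on `{0,1}^M`. -/
noncomputable def uniformPMF (M : ℕ) (_x : Fin M → Bool) : ℝ := 1 / (2 : ℝ) ^ M

/-- The product distribution `U_M^{S,η}` on `{0,1}^M`: coordinate `i` has mean `1/2 + η`
if `i ∈ S` and mean `1/2` otherwise. -/
noncomputable def prodPMF (M : ℕ) (S : Finset (Fin M)) (η : ℝ) (x : Fin M → Bool) : ℝ :=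
  ∏ i : Fin M, if i ∈ S then (if x i then 1 / 2 + η else 1 / 2 - η) else (1 / 2 : ℝ)

/-- Total variation distance between pmfs on `{0,1}^M`. -/
noncomputable def dTVCube (M : ℕ) (P Q : (Fin M → Bool) → ℝ) : ℝ :=
  (∑ x : Fin M → Bool, |P x - Q x|) / 2

open Polynomial

section Counting

variable {ι : Type*} [Fintype ι] [DecidableEq ι]

def trueCount (S : Finset ι) (x : ι → Bool) : ℕ := #{i ∈ S | x i}

theorem card_filter_trueCount_eq (S : Finset ι) (k : ℕ) :
    #{x : ι → Bool | trueCount S x = k} = (#S).choose k * 2 ^ (Fintype.card ι - #S) := by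
  rw [← card_powersetCard, ← card_compl, ← card_powerset, ← card_product]
  refine card_nbij' (fun x => ({i ∈ S | x i}, {i ∈ Sᶜ | x i})) (fun P i => decide (i ∈ P.1 ∪ P.2))
    (fun x hx => ?_) (fun P hP => ?_) (fun x _ => ?_) (fun P hP => ?_)
  · rw [mem_coe, mem_filter] at hx
    simp only [mem_coe, mem_product, mem_powersetCard, mem_powerset]
    exact ⟨⟨filter_subset _ _, hx.2⟩, filter_subset _ _⟩
  · simp only [mem_coe, mem_product, mem_powersetCard, mem_powerset] at hP
    rw [mem_coe, mem_filter, trueCount, ← hP.1.2]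
    refine ⟨mem_univ _, congrArg card ?_⟩
    ext i
    grind [mem_compl]
  · funext i
    by_cases hi : i ∈ S <;> simp [hi]
  · simp only [mem_coe, mem_product, mem_powersetCard, mem_powerset] at hP
    ext i <;> grind [mem_compl]

end Counting

section ProductPMF

variable {M : ℕ}

theorem prodPMF_eq_pow (S : Finset (Fin M)) (η : ℝ) (x : Fin M → Bool) :
    prodPMF M S η x = (1 / 2 + η) ^ trueCount S x * (1 / 2 - η) ^ (#S - trueCount S x)
      * (1 / 2) ^ (M - #S) := by
  have hfalse : #{i ∈ S | ¬x i} = #S - trueCount S x := by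
    rw [trueCount, ← card_filter_add_card_filter_not (s := S) (p := fun i => x i = true)]
    omega
  rw [prodPMF, ← prod_mul_prod_compl S, prod_congr rfl fun i hi => if_pos hi,
    prod_congr rfl fun i hi => if_neg (mem_compl.1 hi), prod_const, card_compl, Fintype.card_fin,
    prod_ite, prod_const, prod_const, hfalse]
  rfl

theorem sum_prodPMF (S : Finset (Fin M)) (η : ℝ) : ∑ x, prodPMF M S η x = 1 := by
  have := Fintype.prod_sum fun i (b : Bool) =>
    if i ∈ S then (if b then 1 / 2 + η else 1 / 2 - η) else (1 / 2 : ℝ)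
  simp only [prodPMF, ← this, Fintype.sum_bool, if_true, Bool.false_eq_true, if_false]
  exact prod_eq_one fun i _ => by split_ifs <;> ring

theorem uniformPMF_eq_prodPMF_zero (S : Finset (Fin M)) : uniformPMF M = prodPMF M S 0 := by
  funext x
  simp [uniformPMF, prodPMF]

theorem sum_prodPMF_filter_trueCount_mem (S : Finset (Fin M)) (η : ℝ) (K : Finset ℕ) :
    ∑ x with trueCount S x ∈ K, prodPMF M S η x
      = ∑ k ∈ K, (bernsteinPolynomial ℝ #S k).eval (1 / 2 + η) := by
  rw [← sum_fiberwise_eq_sum_filter]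
  refine sum_congr rfl fun k _ => ?_
  rw [sum_congr rfl fun x hx => by rw [prodPMF_eq_pow, (mem_filter.1 hx).2], sum_const,
    card_filter_trueCount_eq, Fintype.card_fin, nsmul_eq_mul]
  have h2 : (2 : ℝ) ^ (M - #S) * (1 / 2) ^ (M - #S) = 1 := by rw [← mul_pow]; norm_num
  simp only [bernsteinPolynomial, eval_mul, eval_natCast, eval_pow, eval_X, eval_sub, eval_one]
  push_cast
  linear_combination ((#S).choose k * ((1 / 2 + η) ^ k * (1 / 2 - η) ^ (#S - k)) : ℝ) * h2

end ProductPMF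

theorem sum_sub_le_dTVCube {M : ℕ} {P Q : (Fin M → Bool) → ℝ} (hPQ : ∑ x, P x = ∑ x, Q x)
    (A : Finset (Fin M → Bool)) : ∑ x ∈ A, (Q x - P x) ≤ dTVCube M P Q := by
  have htotal : ∑ x ∈ A, (Q x - P x) + ∑ x ∈ Aᶜ, (Q x - P x) = 0 := by
    rw [sum_add_sum_compl, sum_sub_distrib, hPQ, sub_self]
  have hA : ∑ x ∈ A, (Q x - P x) ≤ ∑ x ∈ A, |P x - Q x| :=
    sum_le_sum fun x _ => abs_sub_comm (P x) (Q x) ▸ le_abs_self _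
  have hAc : -∑ x ∈ Aᶜ, (Q x - P x) ≤ ∑ x ∈ Aᶜ, |P x - Q x| := by
    rw [← sum_neg_distrib]
    exact sum_le_sum fun x _ => neg_sub (Q x) (P x) ▸ le_abs_self _
  rw [dTVCube, ← sum_add_sum_compl A]
  linarith

/-- `P(Bin(n, p) > t)` as a polynomial in `p`. -/
noncomputable def binomialTail (n t : ℕ) : ℝ[X] := ∑ k ∈ Ioc t n, bernsteinPolynomial ℝ n k

theorem derivative_binomialTail {n t : ℕ} (ht : t ≤ n) :
    derivative (binomialTail n t) = n * bernsteinPolynomial ℝ (n - 1) t := by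
  rcases Nat.eq_zero_or_pos n with rfl | hn
  · obtain rfl : t = 0 := by omega
    simp [binomialTail]
  rw [binomialTail, ← Ico_add_one_add_one_eq_Ioc, ← sum_Ico_add', derivative_sum]
  simp only [bernsteinPolynomial.derivative_succ, ← mul_sum]
  have htelescope := sum_Ico_sub (fun k => bernsteinPolynomial ℝ (n - 1) k) ht
  rw [bernsteinPolynomial.eq_zero_of_lt ℝ (Nat.sub_lt hn one_pos), sum_sub_distrib] at htelescope
  rw [sum_sub_distrib]
  linear_combination (-(n : ℝ[X])) * htelescope

theorem sixteen_pow_le_mul_centralBinom_sq (r : ℕ) : 16 ^ r ≤ (4 * r + 1) * r.centralBinom ^ 2 := by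
  induction r with
  | zero => simp
  | succ r ih =>
    have hrec := Nat.succ_mul_centralBinom_succ r
    refine Nat.le_of_mul_le_mul_right (c := (r + 1) ^ 2) ?_ (by positivity)
    calc 16 ^ (r + 1) * (r + 1) ^ 2 = 16 * 16 ^ r * (r + 1) ^ 2 := by ring
      _ ≤ 16 * ((4 * r + 1) * r.centralBinom ^ 2) * (r + 1) ^ 2 := by gcongr
      _ ≤ (4 * (r + 1) + 1) * (2 * (2 * r + 1) * r.centralBinom) ^ 2 := by
        have : 4 * (4 * r + 1) * (r + 1) ^ 2 ≤ (4 * r + 5) * (2 * r + 1) ^ 2 := by ring_nf; omega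
        nlinarith [Nat.zero_le (r.centralBinom ^ 2)]
      _ = (4 * (r + 1) + 1) * (r + 1).centralBinom ^ 2 * (r + 1) ^ 2 := by rw [← hrec]; ring

theorem four_pow_le_mul_choose_sq {a b : ℕ} (hba : b ≤ a) (hab : a ≤ b + 1) :
    4 ^ (a + b) ≤ 4 * (a + b + 1) * (a + b).choose a ^ 2 := by
  rcases (show a = b ∨ a = b + 1 by omega) with rfl | rfl
  · calc 4 ^ (a + a) = 16 ^ a := by rw [← two_mul, pow_mul]; norm_num
      _ ≤ (4 * a + 1) * (2 * a).choose a ^ 2 := by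
        simpa [Nat.centralBinom_eq_two_mul_choose] using sixteen_pow_le_mul_centralBinom_sq a
      _ ≤ 4 * (a + a + 1) * (a + a).choose a ^ 2 := by rw [two_mul]; gcongr; omega
  · have hhalf : (b + 1).centralBinom = 2 * (2 * b + 1).choose (b + 1) := by
      rw [Nat.centralBinom_eq_two_mul_choose, show 2 * (b + 1) = 2 * b + 1 + 1 by ring,
        Nat.choose_succ_succ', Nat.choose_symm_half]
      ring
    have h := sixteen_pow_le_mul_centralBinom_sq (b + 1)
    rw [hhalf] at h
    rw [show b + 1 + b = 2 * b + 1 by ring]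
    refine Nat.le_of_mul_le_mul_left (c := 4) ?_ (by norm_num)
    calc 4 * 4 ^ (2 * b + 1) = 16 ^ (b + 1) := by rw [pow_succ, pow_mul]; ring
      _ ≤ (4 * (b + 1) + 1) * (2 * (2 * b + 1).choose (b + 1)) ^ 2 := h
      _ ≤ 4 * (4 * (2 * b + 1 + 1) * (2 * b + 1).choose (b + 1) ^ 2) := by
        nlinarith [Nat.zero_le ((2 * b + 1).choose (b + 1) ^ 2)]

theorem quarter_pow_div_four_le_pow_mul_one_sub_pow {a b : ℕ} {c : ℝ} (hba : b ≤ a)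
    (hab : a ≤ b + 1) (hc : 1 / 2 ≤ c) (hcm : (a + b + 1) * (c - 1 / 2) ^ 2 ≤ 1 / 4) :
    (1 / 4) ^ b / 4 ≤ c ^ a * (1 - c) ^ b := by
  obtain ⟨e, rfl⟩ := Nat.exists_eq_add_of_le hba
  push_cast at hcm
  have he : (1 / 2 : ℝ) ≤ c ^ e := by
    rcases (show e = 0 ∨ e = 1 by omega) with rfl | rfl <;> norm_num [hc]
  have hb : 4 * b * (c - 1 / 2) ^ 2 ≤ 1 / 2 := by
    nlinarith [sq_nonneg (c - 1 / 2), (Nat.cast_nonneg e : (0 : ℝ) ≤ e)]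
  have hquarter : 4 * (c - 1 / 2) ^ 2 ≤ 1 := by
    nlinarith [sq_nonneg (c - 1 / 2), (Nat.cast_nonneg e : (0 : ℝ) ≤ e),
      (Nat.cast_nonneg b : (0 : ℝ) ≤ b)]
  have hbernoulli : 1 - 4 * b * (c - 1 / 2) ^ 2 ≤ (1 - 4 * (c - 1 / 2) ^ 2) ^ b := by
    have := one_add_mul_le_pow (a := -(4 * (c - 1 / 2) ^ 2)) (by linarith) b
    rw [← sub_eq_add_neg] at this
    linarith
  calc (1 / 4 : ℝ) ^ b / 4 ≤ (1 / 4) ^ b * (1 - 4 * b * (c - 1 / 2) ^ 2) * (1 / 2) := by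
        have : (0 : ℝ) ≤ (1 / 4) ^ b := by positivity
        nlinarith
    _ ≤ (1 / 4) ^ b * (1 - 4 * (c - 1 / 2) ^ 2) ^ b * c ^ e :=
        mul_le_mul (mul_le_mul_of_nonneg_left hbernoulli (by positivity)) he (by norm_num)
          (mul_nonneg (by positivity) (pow_nonneg (by linarith) b))
    _ = c ^ (b + e) * (1 - c) ^ b := by
        rw [← mul_pow, show (1 / 4 : ℝ) * (1 - 4 * (c - 1 / 2) ^ 2) = c * (1 - c) by ring,
          mul_pow, pow_add]
        ring

theorem sqrt_div_eight_le_mul_eval_bernsteinPolynomial {a b : ℕ} {c : ℝ} (hba : b ≤ a)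
    (hab : a ≤ b + 1) (hc : 1 / 2 ≤ c) (hcm : (a + b + 1) * (c - 1 / 2) ^ 2 ≤ 1 / 4) :
    √(a + b + 1 : ℝ) / 8 ≤ (a + b + 1) * (bernsteinPolynomial ℝ (a + b) a).eval c := by
  obtain ⟨n, hn⟩ : ∃ n : ℝ, n = a + b + 1 := ⟨_, rfl⟩
  obtain ⟨C, hC⟩ : ∃ C : ℝ, C = (a + b).choose a := ⟨_, rfl⟩
  obtain ⟨q, hq⟩ : ∃ q : ℝ, q = c ^ a * (1 - c) ^ b := ⟨_, rfl⟩
  have heval : (bernsteinPolynomial ℝ (a + b) a).eval c = C * q := by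
    simp only [bernsteinPolynomial, eval_mul, eval_natCast, eval_pow, eval_X, eval_sub, eval_one,
      Nat.add_sub_cancel_left, hC, hq, mul_assoc]
  have hcentral : (16 : ℝ) ^ b ≤ 4 * n * C ^ 2 := by
    have h16 : (16 : ℝ) ^ b ≤ 4 ^ (a + b) := by
      rw [show (16 : ℝ) ^ b = 4 ^ (2 * b) by rw [pow_mul]; norm_num]
      exact pow_le_pow_right₀ (by norm_num) (by omega)
    rw [hn, hC]
    exact h16.trans (by exact_mod_cast four_pow_le_mul_choose_sq hba hab)
  have hqlow := quarter_pow_div_four_le_pow_mul_one_sub_pow hba hab hc hcm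
  rw [← hq, div_le_iff₀ (by norm_num), one_div_pow, div_le_iff₀ (by positivity)] at hqlow
  have hq16 : 1 ≤ 16 * 16 ^ b * q ^ 2 := by
    have : (16 : ℝ) ^ b = (4 ^ b) ^ 2 := by rw [← pow_mul, mul_comm, pow_mul]; norm_num
    nlinarith
  have hD : 0 ≤ n * (C * q) := by
    have : 0 ≤ q := by nlinarith [(by positivity : (0 : ℝ) < 4 ^ b)]
    rw [hn, hC]
    positivity
  have hsq : n / 64 ≤ (n * (C * q)) ^ 2 := by
    have h16 : (0 : ℝ) < 16 ^ b := by positivity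
    refine le_of_mul_le_mul_right ?_ h16
    calc n / 64 * 16 ^ b ≤ n / 64 * (4 * n * C ^ 2 * (16 * 16 ^ b * q ^ 2)) := by
          gcongr
          exacts [hn ▸ by positivity,
            hcentral.trans (le_mul_of_one_le_right (h16.le.trans hcentral) hq16)]
      _ = (n * (C * q)) ^ 2 * 16 ^ b := by ring
  rw [← hn, heval, ← Real.sqrt_sq hD,
    show √n / 8 = √(n / 64) by rw [Real.sqrt_div' _ (by norm_num : (0:ℝ) ≤ 64)]; norm_num]
  exact Real.sqrt_le_sqrt hsq

theorem mul_sqrt_div_eight_le_eval_binomialTail_sub {m : ℕ} {η : ℝ} (hm : 0 < m) (hη : 0 ≤ η)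
    (hmη : m * η ^ 2 ≤ 1 / 4) :
    η * (√m / 8)
      ≤ (binomialTail m (m / 2)).eval (1 / 2 + η) - (binomialTail m (m / 2)).eval (1 / 2) := by
  have hderiv : ∀ c ∈ interior (Set.Icc (1 / 2 : ℝ) (1 / 2 + η)),
      √m / 8 ≤ deriv (fun x => (binomialTail m (m / 2)).eval x) c := by
    intro c hc
    rw [interior_Icc] at hc
    obtain ⟨b, hb⟩ : ∃ b, m - 1 = m / 2 + b := ⟨m - 1 - m / 2, by omega⟩
    have hm' : (m : ℝ) = (m / 2 : ℕ) + b + 1 := by exact_mod_cast (by omega : m = m / 2 + b + 1)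
    rw [Polynomial.deriv, derivative_binomialTail (Nat.div_le_self m 2), eval_mul, eval_natCast,
      hb, hm']
    refine sqrt_div_eight_le_mul_eval_bernsteinPolynomial (by omega) (by omega) hc.1.le ?_
    rw [← hm']
    have : (c - 1 / 2) ^ 2 ≤ η ^ 2 := pow_le_pow_left₀ (by linarith [hc.1]) (by linarith [hc.2]) 2
    nlinarith [(Nat.cast_nonneg m : (0 : ℝ) ≤ m)]
  have := (convex_Icc (1 / 2 : ℝ) (1 / 2 + η)).mul_sub_le_image_sub_of_le_deriv
    (binomialTail m (m / 2)).continuous.continuousOn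
    (binomialTail m (m / 2)).differentiable.differentiableOn hderiv
    (1 / 2) (by simp [hη]) (1 / 2 + η) (by simp [hη]) (by linarith)
  rwa [add_sub_cancel_left, mul_comm] at this

/-- The perturbed product distribution `U_M^{S, δ/√m}` is `Ω(δ)`-far from uniform
in total variation distance. -/
theorem product_tv_lower_bound :
    ∃ c δ₀ : ℝ, 0 < c ∧ 0 < δ₀ ∧
    ∀ (m M : ℕ), 0 < m → m < M →
      ∀ S : Finset (Fin M), S.card = m →
        ∀ δ : ℝ, 0 < δ → δ < δ₀ →
          c * δ ≤ dTVCube M (uniformPMF M) (prodPMF M S (δ / Real.sqrt m)) := by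
  refine ⟨1 / 8, 1 / 2, by norm_num, by norm_num, fun m M hm _ S hS δ hδ hδ₀ => ?_⟩
  have hsqrt : 0 < √(m : ℝ) := Real.sqrt_pos.2 (by exact_mod_cast hm)
  have hmη : (m : ℝ) * (δ / √m) ^ 2 = δ ^ 2 := by
    rw [div_pow, Real.sq_sqrt (Nat.cast_nonneg m)]
    field_simp
  have hevent (η : ℝ) : ∑ x with trueCount S x ∈ Ioc (m / 2) m, prodPMF M S η x
      = (binomialTail m (m / 2)).eval (1 / 2 + η) := by
    rw [sum_prodPMF_filter_trueCount_mem, binomialTail, eval_finsetSum, hS]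
  calc 1 / 8 * δ = δ / √m * (√m / 8) := by field_simp
    _ ≤ (binomialTail m (m / 2)).eval (1 / 2 + δ / √m) - (binomialTail m (m / 2)).eval (1 / 2) :=
        mul_sqrt_div_eight_le_eval_binomialTail_sub hm (by positivity) (by nlinarith)
    _ = ∑ x with trueCount S x ∈ Ioc (m / 2) m,
          (prodPMF M S (δ / √m) x - uniformPMF M x) := by
        rw [sum_sub_distrib, hevent, uniformPMF_eq_prodPMF_zero S, hevent, add_zero]
    _ ≤ _ := sum_sub_le_dTVCube (by rw [uniformPMF_eq_prodPMF_zero S, sum_prodPMF, sum_prodPMF]) _
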